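/- Let U : 𝒫₂(ℝ^d) → ℝ be continuously L-differentiable (L-C¹) and define V(x,m) := U((id+x)♯m) for x ∈ ℝ^d and m ∈ 𝒫₂(ℝ^d), where id+x denotes the translation z ↦ z+x. Then for each m the map x ↦ V(x,m) is of class C¹ and D_x V(x,m) = ∫_{ℝ^d} D_m U((id+x)♯m, x+y) m(dy). -/

import Mathlib

open MeasureTheory Set

noncomputable section

/-- Euclidean space `ℝ^d`. -/
abbrev Ed (d : ℕ) : Type := EuclideanSpace ℝ (Fin d)

/-- `m ∈ 𝒫₂(ℝ^d)`: Borel probability measure with finite second moment. -/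
def IsP2 {d : ℕ} (μ : Measure (Ed d)) : Prop :=
  IsProbabilityMeasure μ ∧ Integrable (fun x => ‖x‖ ^ 2) μ

/-- `π` is a coupling of `μ` and `ν`. -/
def IsCoupling {d : ℕ} (π : Measure (Ed d × Ed d)) (μ ν : Measure (Ed d)) : Prop :=
  π.map Prod.fst = μ ∧ π.map Prod.snd = ν

/-- The Wasserstein distance `d₂`. -/
noncomputable def W2 {d : ℕ} (μ ν : Measure (Ed d)) : ℝ :=
  sInf { r : ℝ | ∃ π : Measure (Ed d × Ed d), IsProbabilityMeasure π ∧ IsCoupling π μ ν ∧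
    r = (∫ p, ‖p.1 - p.2‖ ^ 2 ∂π) ^ (1 / 2 : ℝ) }

/-- The convex combination `(1-s) μ + s ν` of measures. -/
noncomputable def mixM {d : ℕ} (s : ℝ) (μ ν : Measure (Ed d)) : Measure (Ed d) :=
  ENNReal.ofReal (1 - s) • μ + ENNReal.ofReal s • ν

/-- `U : 𝒫₂(ℝ^d) → ℝ` is continuously `L`-differentiable (`L-C¹`) with flat derivative `F`. -/
def IsLC1 {d : ℕ} (U : Measure (Ed d) → ℝ) (F : Measure (Ed d) → Ed d → ℝ) : Prop :=
  (∀ m, IsP2 m → ∀ ε > (0 : ℝ), ∃ δ > (0 : ℝ), ∀ m', IsP2 m' →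
    W2 m m' < δ → |U m' - U m| < ε) ∧
  (∀ m m', IsP2 m → IsP2 m' →
    U m' - U m =
      ∫ s in (0 : ℝ)..1,
        ((∫ y, F (mixM s m m') y ∂m') - ∫ y, F (mixM s m m') y ∂m)) ∧
  (∀ m, IsP2 m → (∫ y, F m y ∂m) = 0) ∧
  (∃ B, ∀ m y, IsP2 m → |F m y| ≤ B) ∧
  (∀ m y, IsP2 m → ∀ ε > (0 : ℝ), ∃ δ > (0 : ℝ), ∀ m' y', IsP2 m' →
    W2 m m' < δ → ‖y' - y‖ < δ → |F m' y' - F m y| < ε) ∧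
  (∀ m, IsP2 m → Differentiable ℝ (F m)) ∧
  (∃ B, ∀ m y, IsP2 m → ‖fderiv ℝ (F m) y‖ ≤ B) ∧
  (∀ m y, IsP2 m → ∀ ε > (0 : ℝ), ∃ δ > (0 : ℝ), ∀ m' y', IsP2 m' →
    W2 m m' < δ → ‖y' - y‖ < δ → ‖fderiv ℝ (F m') y' - fderiv ℝ (F m) y‖ < ε)

/-!
Write `V x' = U ((id + x')♯m)`. The flat derivative formula between `(id + x)♯m` and
`(id + x')♯m` expresses `V x' - V x` as `∫₀¹ ∫ [F μₛ (y + x') - F μₛ (y + x)] m(dy) ds`, where the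
mixtures `μₛ` all lie within `W2`-distance `‖x' - x‖` of `(id + x)♯m` (couple `y + x` with
`y + x'`). By the mean value inequality and the joint continuity of `D_y F`, each integrand equals
`D_y F ((id + x)♯m) (x + y) (x' - x)` up to an error that is `o(‖x' - x‖)` pointwise and
`O(‖x' - x‖)` uniformly, so dominated convergence, first in `y` and then in `s`, gives the
derivative. Its continuity in `x` is dominated convergence once more.
-/

open Filter Topology InnerProductSpace
open scoped ENNReal

variable {d : ℕ}

lemma W2_nonneg (μ ν : Measure (Ed d)) : 0 ≤ W2 μ ν :=
  Real.sInf_nonneg fun _ ⟨_, _, _, hr⟩ => hr ▸ by positivity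

lemma IsCoupling.isProbabilityMeasure {π : Measure (Ed d × Ed d)} {μ ν : Measure (Ed d)}
    [IsProbabilityMeasure μ] (h : IsCoupling π μ ν) : IsProbabilityMeasure π :=
  ⟨by simpa [Measure.map_apply measurable_fst MeasurableSet.univ] using
    congrArg (fun ρ : Measure (Ed d) => ρ univ) h.1⟩

lemma IsCoupling.add {π₁ π₂ : Measure (Ed d × Ed d)} {μ₁ μ₂ ν₁ ν₂ : Measure (Ed d)}
    (h₁ : IsCoupling π₁ μ₁ ν₁) (h₂ : IsCoupling π₂ μ₂ ν₂) :
    IsCoupling (π₁ + π₂) (μ₁ + μ₂) (ν₁ + ν₂) :=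
  ⟨by rw [Measure.map_add _ _ measurable_fst, h₁.1, h₂.1],
    by rw [Measure.map_add _ _ measurable_snd, h₁.2, h₂.2]⟩

lemma IsCoupling.smul {π : Measure (Ed d × Ed d)} {μ ν : Measure (Ed d)} (c : ℝ≥0∞)
    (h : IsCoupling π μ ν) : IsCoupling (c • π) (c • μ) (c • ν) :=
  ⟨by rw [Measure.map_smul, h.1], by rw [Measure.map_smul, h.2]⟩

lemma isCoupling_map_prodMk {f g : Ed d → Ed d} (hf : Measurable f) (hg : Measurable g)
    (m : Measure (Ed d)) : IsCoupling (m.map fun y => (f y, g y)) (m.map f) (m.map g) :=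
  ⟨by rw [Measure.map_map measurable_fst (hf.prodMk hg)]; rfl,
    by rw [Measure.map_map measurable_snd (hf.prodMk hg)]; rfl⟩

lemma W2_le_of_coupling {μ ν : Measure (Ed d)} [IsProbabilityMeasure μ]
    {π : Measure (Ed d × Ed d)} (hπ : IsCoupling π μ ν) {C : ℝ} (hC : 0 ≤ C)
    (hcost : ∫ p, ‖p.1 - p.2‖ ^ 2 ∂π ≤ C ^ 2) : W2 μ ν ≤ C := by
  have hbdd : BddBelow {r : ℝ | ∃ π : Measure (Ed d × Ed d), IsProbabilityMeasure π ∧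
      IsCoupling π μ ν ∧ r = (∫ p, ‖p.1 - p.2‖ ^ 2 ∂π) ^ (1 / 2 : ℝ)} :=
    ⟨0, fun _ ⟨_, _, _, hr⟩ => hr ▸ by positivity⟩
  refine (csInf_le hbdd ⟨π, hπ.isProbabilityMeasure, hπ, rfl⟩).trans ?_
  rw [← Real.sqrt_eq_rpow]
  exact (Real.sqrt_le_sqrt hcost).trans_eq (Real.sqrt_sq hC)

lemma mixM_comm (s : ℝ) (μ ν : Measure (Ed d)) : mixM s μ ν = mixM (1 - s) ν μ := by
  rw [mixM, mixM, sub_sub_cancel, add_comm]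

lemma isProbabilityMeasure_mixM {μ ν : Measure (Ed d)} [IsProbabilityMeasure μ]
    [IsProbabilityMeasure ν] {s : ℝ} (hs : s ∈ Icc (0 : ℝ) 1) :
    IsProbabilityMeasure (mixM s μ ν) := by
  constructor
  simp only [mixM, Measure.add_apply, Measure.smul_apply, smul_eq_mul, measure_univ, mul_one]
  rw [← ENNReal.ofReal_add (by linarith [hs.2]) hs.1]
  norm_num

lemma isP2_mixM {μ ν : Measure (Ed d)} (hμ : IsP2 μ) (hν : IsP2 ν) {s : ℝ}
    (hs : s ∈ Icc (0 : ℝ) 1) : IsP2 (mixM s μ ν) :=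
  have := hμ.1
  have := hν.1
  ⟨isProbabilityMeasure_mixM hs, (hμ.2.smul_measure ENNReal.ofReal_ne_top).add_measure
    (hν.2.smul_measure ENNReal.ofReal_ne_top)⟩

lemma isP2_map_add {m : Measure (Ed d)} (hm : IsP2 m) (a : Ed d) :
    IsP2 (m.map (· + a)) := by
  have := hm.1
  refine ⟨Measure.isProbabilityMeasure_map (measurable_add_const a).aemeasurable, ?_⟩
  rw [integrable_map_measure (by fun_prop) (measurable_add_const a).aemeasurable]
  have hid : MemLp (fun y : Ed d => y) 2 m :=
    (memLp_two_iff_integrable_sq_norm aestronglyMeasurable_id).2 hm.2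
  exact (memLp_two_iff_integrable_sq_norm (by fun_prop)).1 (hid.add (memLp_const a))

lemma integrable_sqDist_map_prodMk {f g : Ed d → Ed d} (hf : Measurable f) (hg : Measurable g)
    (m : Measure (Ed d)) [IsFiniteMeasure m] {c : Ed d} (hc : ∀ y, f y - g y = c) :
    Integrable (fun p : Ed d × Ed d => ‖p.1 - p.2‖ ^ 2) (m.map fun y => (f y, g y)) := by
  rw [integrable_map_measure (by fun_prop) (hf.prodMk hg).aemeasurable]
  simp only [Function.comp_def, hc]
  exact integrable_const _

lemma integral_sqDist_map_prodMk {f g : Ed d → Ed d} (hf : Measurable f) (hg : Measurable g)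
    (m : Measure (Ed d)) {c : Ed d} (hc : ∀ y, f y - g y = c) :
    ∫ p, ‖p.1 - p.2‖ ^ 2 ∂(m.map fun y => (f y, g y)) = m.real univ * ‖c‖ ^ 2 := by
  rw [integral_map (hf.prodMk hg).aemeasurable (by fun_prop)]
  simp [hc]

lemma W2_mixM_le {μ ν : Measure (Ed d)} [IsProbabilityMeasure μ] [IsProbabilityMeasure ν]
    {π₀ : Measure (Ed d × Ed d)} (hπ₀ : IsCoupling π₀ μ ν)
    (hint : Integrable (fun p => ‖p.1 - p.2‖ ^ 2) π₀) {C : ℝ} (hC : 0 ≤ C)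
    (hcost : ∫ p, ‖p.1 - p.2‖ ^ 2 ∂π₀ ≤ C ^ 2) {s₁ s₂ : ℝ} (h₀ : 0 ≤ s₁) (h₁₂ : s₁ ≤ s₂)
    (h₂ : s₂ ≤ 1) : W2 (mixM s₁ μ ν) (mixM s₂ μ ν) ≤ √(s₂ - s₁) * C := by
  have diag_coupling (ρ : Measure (Ed d)) : IsCoupling (ρ.map fun y => (y, y)) ρ ρ := by
    simpa using isCoupling_map_prodMk measurable_id' measurable_id' ρ
  have diag_int (ρ : Measure (Ed d)) [IsProbabilityMeasure ρ] :
      Integrable (fun p : Ed d × Ed d => ‖p.1 - p.2‖ ^ 2) (ρ.map fun y => (y, y)) :=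
    integrable_sqDist_map_prodMk measurable_id' measurable_id' ρ sub_self
  have diag_integral (ρ : Measure (Ed d)) :
      ∫ p, ‖p.1 - p.2‖ ^ 2 ∂(ρ.map fun y => (y, y)) = 0 := by
    simpa using integral_sqDist_map_prodMk measurable_id' measurable_id' ρ sub_self
  have := isProbabilityMeasure_mixM (μ := μ) (ν := ν) ⟨h₀, h₁₂.trans h₂⟩
  -- the two mixtures share the mass `1 - s₂` of `μ` and `s₁` of `ν`; only the mass `s₂ - s₁` moves
  have hπ : IsCoupling (ENNReal.ofReal (1 - s₂) • μ.map (fun y => (y, y))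
      + ENNReal.ofReal s₁ • ν.map (fun y => (y, y)) + ENNReal.ofReal (s₂ - s₁) • π₀)
      (mixM s₁ μ ν) (mixM s₂ μ ν) := by
    have h := (((diag_coupling μ).smul (ENNReal.ofReal (1 - s₂))).add
      ((diag_coupling ν).smul (ENNReal.ofReal s₁))).add (hπ₀.smul (ENNReal.ofReal (s₂ - s₁)))
    have e₁ : ENNReal.ofReal (1 - s₁) = ENNReal.ofReal (1 - s₂) + ENNReal.ofReal (s₂ - s₁) := by
      rw [← ENNReal.ofReal_add (by linarith) (by linarith)]; ring_nf
    have e₂ : ENNReal.ofReal s₂ = ENNReal.ofReal s₁ + ENNReal.ofReal (s₂ - s₁) := by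
      rw [← ENNReal.ofReal_add h₀ (by linarith)]; ring_nf
    convert h using 1 <;> rw [mixM] <;> [rw [e₁]; rw [e₂]] <;> rw [add_smul] <;> abel
  refine W2_le_of_coupling hπ (by positivity) ?_
  rw [integral_add_measure (((diag_int μ).smul_measure ENNReal.ofReal_ne_top).add_measure
      ((diag_int ν).smul_measure ENNReal.ofReal_ne_top)) (hint.smul_measure ENNReal.ofReal_ne_top),
    integral_add_measure ((diag_int μ).smul_measure ENNReal.ofReal_ne_top)
      ((diag_int ν).smul_measure ENNReal.ofReal_ne_top),
    integral_smul_measure, integral_smul_measure, integral_smul_measure, diag_integral,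
    diag_integral, ENNReal.toReal_ofReal (sub_nonneg.2 h₁₂), mul_pow, Real.sq_sqrt (by linarith)]
  simpa using mul_le_mul_of_nonneg_left hcost (sub_nonneg.2 h₁₂)

lemma W2_mixM_map_add_le (m : Measure (Ed d)) [IsProbabilityMeasure m] (a b : Ed d) {s₁ s₂ : ℝ}
    (h₀ : 0 ≤ s₁) (h₁₂ : s₁ ≤ s₂) (h₂ : s₂ ≤ 1) :
    W2 (mixM s₁ (m.map (· + a)) (m.map (· + b))) (mixM s₂ (m.map (· + a)) (m.map (· + b)))
      ≤ √(s₂ - s₁) * ‖a - b‖ := by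
  have := Measure.isProbabilityMeasure_map (μ := m) (measurable_add_const a).aemeasurable
  have := Measure.isProbabilityMeasure_map (μ := m) (measurable_add_const b).aemeasurable
  have hτ (y : Ed d) : y + a - (y + b) = a - b := add_sub_add_left_eq_sub a b y
  refine W2_mixM_le (isCoupling_map_prodMk (measurable_add_const a) (measurable_add_const b) m)
    (integrable_sqDist_map_prodMk (measurable_add_const a) (measurable_add_const b) m hτ)
    (norm_nonneg _) ?_ h₀ h₁₂ h₂
  simp [integral_sqDist_map_prodMk (measurable_add_const a) (measurable_add_const b) m hτ]

lemma W2_mixM_map_add_le_abs (m : Measure (Ed d)) [IsProbabilityMeasure m] (a b : Ed d)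
    {s s' : ℝ} (hs : s ∈ Icc (0 : ℝ) 1) (hs' : s' ∈ Icc (0 : ℝ) 1) :
    W2 (mixM s (m.map (· + a)) (m.map (· + b))) (mixM s' (m.map (· + a)) (m.map (· + b)))
      ≤ √|s' - s| * ‖a - b‖ := by
  rcases le_total s s' with h | h
  · simpa [abs_of_nonneg (sub_nonneg.2 h)] using W2_mixM_map_add_le m a b hs.1 h hs'.2
  · rw [mixM_comm s, mixM_comm s', abs_of_nonpos (sub_nonpos.2 h), neg_sub, norm_sub_rev]
    simpa using W2_mixM_map_add_le m b a (s₁ := 1 - s) (s₂ := 1 - s')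
      (by linarith [hs.2]) (by linarith) (by linarith [hs'.1])

lemma W2_map_add_mixM_le (m : Measure (Ed d)) [IsProbabilityMeasure m] (a b : Ed d) {s : ℝ}
    (hs : s ∈ Icc (0 : ℝ) 1) :
    W2 (m.map (· + a)) (mixM s (m.map (· + a)) (m.map (· + b))) ≤ ‖a - b‖ := by
  have h := W2_mixM_map_add_le m a b le_rfl hs.1 hs.2
  simp only [mixM, sub_zero, ENNReal.ofReal_one, one_smul, ENNReal.ofReal_zero, zero_smul,
    add_zero] at h
  exact h.trans (mul_le_of_le_one_left (norm_nonneg _) (Real.sqrt_le_one.2 hs.2))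

lemma W2_map_add_le (m : Measure (Ed d)) [IsProbabilityMeasure m] (a b : Ed d) :
    W2 (m.map (· + a)) (m.map (· + b)) ≤ ‖a - b‖ := by
  simpa [mixM] using W2_map_add_mixM_le m a b (s := 1) ⟨zero_le_one, le_rfl⟩

lemma W2_self (μ : Measure (Ed d)) [IsProbabilityMeasure μ] : W2 μ μ = 0 :=
  le_antisymm (by simpa using W2_map_add_le μ 0 0) (W2_nonneg μ μ)

def W2ContinuousAt {E : Type*} [NormedAddCommGroup E] (G : Measure (Ed d) → Ed d → E)
    (μ : Measure (Ed d)) (y : Ed d) : Prop :=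
  ∀ ε > (0 : ℝ), ∃ δ > (0 : ℝ), ∀ μ' y', IsP2 μ' → W2 μ μ' < δ → ‖y' - y‖ < δ →
    ‖G μ' y' - G μ y‖ < ε

lemma W2ContinuousAt.tendsto {E : Type*} [NormedAddCommGroup E] {G : Measure (Ed d) → Ed d → E}
    {μ : Measure (Ed d)} {y : Ed d} (hG : W2ContinuousAt G μ y) {ι : Type*} {l : Filter ι}
    {μ' : ι → Measure (Ed d)} {y' : ι → Ed d} (hP2 : ∀ᶠ i in l, IsP2 (μ' i))
    (hμ' : Tendsto (fun i => W2 μ (μ' i)) l (𝓝 0)) (hy' : Tendsto y' l (𝓝 y)) :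
    Tendsto (fun i => G (μ' i) (y' i)) l (𝓝 (G μ y)) := by
  refine Metric.tendsto_nhds.2 fun ε hε => ?_
  obtain ⟨δ, hδ, hG⟩ := hG ε hε
  filter_upwards [hP2, hμ'.eventually (gt_mem_nhds hδ),
    (tendsto_iff_norm_sub_tendsto_zero.1 hy').eventually (gt_mem_nhds hδ)] with i hi h₁ h₂
  rw [dist_eq_norm]
  exact hG _ _ hi h₁ h₂

lemma W2ContinuousAt.continuous {E : Type*} [NormedAddCommGroup E]
    {G : Measure (Ed d) → Ed d → E} {μ : Measure (Ed d)} (hμ : IsP2 μ)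
    (hG : ∀ y, W2ContinuousAt G μ y) : Continuous (G μ) := by
  have := hμ.1
  exact continuous_iff_continuousAt.2 fun y => (hG y).tendsto (Eventually.of_forall fun _ => hμ)
    (by simp [W2_self]) tendsto_id

theorem tendsto_intervalIntegral_integral_of_dominated {E ι α : Type*} [NormedAddCommGroup E]
    [NormedSpace ℝ E] [MeasurableSpace α] {μ : Measure α} [IsFiniteMeasure μ] {l : Filter ι}
    [l.IsCountablyGenerated] {a b : ℝ} (hab : a ≤ b) {G : ι → ℝ → α → E} {g : ℝ → α → E}
    {C : ℝ} (hG_meas : ∀ i, ∀ s ∈ Icc a b, AEStronglyMeasurable (G i s) μ)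
    (hG_cont : ∀ i, ContinuousOn (fun s => ∫ y, G i s y ∂μ) (Icc a b))
    (hG_le : ∀ i, ∀ s ∈ Icc a b, ∀ y, ‖G i s y‖ ≤ C)
    (hG_lim : ∀ s ∈ Icc a b, ∀ y, Tendsto (fun i => G i s y) l (𝓝 (g s y))) :
    Tendsto (fun i => ∫ s in a..b, ∫ y, G i s y ∂μ) l (𝓝 (∫ s in a..b, ∫ y, g s y ∂μ)) := by
  have hIoc : uIoc a b ⊆ Icc a b := by rw [uIoc_of_le hab]; exact Ioc_subset_Icc_self
  refine intervalIntegral.tendsto_integral_filter_of_dominated_convergence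
    (fun _ => C * μ.real univ) (Eventually.of_forall fun i => ?_)
    (Eventually.of_forall fun i => ae_of_all _ fun s hs => ?_) intervalIntegrable_const
    (ae_of_all _ fun s hs => ?_)
  · exact ((hG_cont i).mono hIoc).aestronglyMeasurable measurableSet_uIoc
  · exact norm_integral_le_of_norm_le_const (ae_of_all _ (hG_le i s (hIoc hs)))
  · exact tendsto_integral_filter_of_dominated_convergence (fun _ => C)
      (Eventually.of_forall fun i => hG_meas i s (hIoc hs))
      (Eventually.of_forall fun i => ae_of_all _ (hG_le i s (hIoc hs))) (integrable_const C)
      (ae_of_all _ (hG_lim s (hIoc hs)))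

lemma inv_norm_mul_le_of_abs_le {E : Type*} [NormedAddCommGroup E] {v : E} {r C : ℝ}
    (hC : 0 ≤ C) (h : |r| ≤ C * ‖v‖) : ‖‖v‖⁻¹ * r‖ ≤ C := by
  rcases eq_or_ne ‖v‖ 0 with hv | hv
  · simpa [hv] using hC
  · rw [norm_mul, norm_inv, norm_norm, Real.norm_eq_abs, inv_mul_le_iff₀ (by positivity)]
    linarith

def translationRemainder (F : Measure (Ed d) → Ed d → ℝ) (m : Measure (Ed d)) (x x' : Ed d)
    (s : ℝ) (y : Ed d) : ℝ :=
  F (mixM s (m.map (· + x)) (m.map (· + x'))) (y + x')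
    - F (mixM s (m.map (· + x)) (m.map (· + x'))) (y + x)
    - fderiv ℝ (F (m.map (· + x))) (x + y) (x' - x)

namespace IsLC1

variable {U : Measure (Ed d) → ℝ} {F : Measure (Ed d) → Ed d → ℝ} {m : Measure (Ed d)}

lemma differentiable (hU : IsLC1 U F) {μ : Measure (Ed d)} (hμ : IsP2 μ) :
    Differentiable ℝ (F μ) :=
  hU.2.2.2.2.2.1 μ hμ

lemma exists_abs_le (hU : IsLC1 U F) : ∃ B, ∀ μ y, IsP2 μ → |F μ y| ≤ B :=
  hU.2.2.2.1

lemma exists_norm_fderiv_le (hU : IsLC1 U F) : ∃ B, ∀ μ y, IsP2 μ → ‖fderiv ℝ (F μ) y‖ ≤ B :=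
  hU.2.2.2.2.2.2.1

lemma w2ContinuousAt (hU : IsLC1 U F) {μ : Measure (Ed d)} (hμ : IsP2 μ) (y : Ed d) :
    W2ContinuousAt F μ y :=
  hU.2.2.2.2.1 μ y hμ

lemma w2ContinuousAt_fderiv (hU : IsLC1 U F) {μ : Measure (Ed d)} (hμ : IsP2 μ) (y : Ed d) :
    W2ContinuousAt (fun μ => fderiv ℝ (F μ)) μ y :=
  hU.2.2.2.2.2.2.2 μ y hμ

lemma continuous (hU : IsLC1 U F) {μ : Measure (Ed d)} (hμ : IsP2 μ) : Continuous (F μ) :=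
  W2ContinuousAt.continuous hμ (hU.w2ContinuousAt hμ)

lemma continuous_fderiv (hU : IsLC1 U F) {μ : Measure (Ed d)} (hμ : IsP2 μ) :
    Continuous (fderiv ℝ (F μ)) :=
  W2ContinuousAt.continuous (G := fun μ => fderiv ℝ (F μ)) hμ (hU.w2ContinuousAt_fderiv hμ)

lemma continuousOn_mixM_map_add (hU : IsLC1 U F) (hm : IsP2 m) (a b z : Ed d) :
    ContinuousOn (fun s => F (mixM s (m.map (· + a)) (m.map (· + b))) z) (Icc 0 1) := by
  have := hm.1
  have hP2 (s : ℝ) (hs : s ∈ Icc (0 : ℝ) 1) : IsP2 (mixM s (m.map (· + a)) (m.map (· + b))) :=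
    isP2_mixM (isP2_map_add hm a) (isP2_map_add hm b) hs
  intro s hs
  refine (hU.w2ContinuousAt (hP2 s hs) z).tendsto (eventually_nhdsWithin_of_forall hP2) ?_
    tendsto_const_nhds
  have hlim : Tendsto (fun s' : ℝ => √|s' - s| * ‖a - b‖) (𝓝[Icc 0 1] s) (𝓝 0) := by
    have : Continuous fun s' : ℝ => √|s' - s| * ‖a - b‖ := by fun_prop
    simpa using (this.tendsto s).mono_left nhdsWithin_le_nhds
  exact squeeze_zero' (Eventually.of_forall fun _ => W2_nonneg _ _)
    (eventually_nhdsWithin_of_forall fun s' hs' => W2_mixM_map_add_le_abs m a b hs hs') hlim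

lemma integrable_comp_add (hU : IsLC1 U F) [IsFiniteMeasure m] {μ : Measure (Ed d)}
    (hμ : IsP2 μ) (c : Ed d) : Integrable (fun y => F μ (y + c)) m :=
  have ⟨B, hB⟩ := hU.exists_abs_le
  Integrable.of_bound ((hU.continuous hμ).comp (continuous_add_const c)).aestronglyMeasurable B
    (ae_of_all _ fun _ => hB μ _ hμ)

lemma integrable_fderiv_const_add (hU : IsLC1 U F) [IsFiniteMeasure m] {μ : Measure (Ed d)}
    (hμ : IsP2 μ) (c : Ed d) : Integrable (fun y => fderiv ℝ (F μ) (c + y)) m :=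
  have ⟨B, hB⟩ := hU.exists_norm_fderiv_le
  Integrable.of_bound ((hU.continuous_fderiv hμ).comp (continuous_const_add c)).aestronglyMeasurable
    B (ae_of_all _ fun _ => hB μ _ hμ)

lemma sub_eq_integral_map_add (hU : IsLC1 U F) (hm : IsP2 m) (a b : Ed d) :
    U (m.map (· + b)) - U (m.map (· + a)) = ∫ s in (0 : ℝ)..1,
      ∫ y, (F (mixM s (m.map (· + a)) (m.map (· + b))) (y + b)
        - F (mixM s (m.map (· + a)) (m.map (· + b))) (y + a)) ∂m := by
  have := hm.1
  rw [hU.2.1 _ _ (isP2_map_add hm a) (isP2_map_add hm b)]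
  refine intervalIntegral.integral_congr fun s hs => ?_
  rw [uIcc_of_le zero_le_one] at hs
  have hP2 := isP2_mixM (isP2_map_add hm a) (isP2_map_add hm b) hs
  rw [integral_map (measurable_add_const b).aemeasurable (hU.continuous hP2).aestronglyMeasurable,
    integral_map (measurable_add_const a).aemeasurable (hU.continuous hP2).aestronglyMeasurable,
    integral_sub (hU.integrable_comp_add hP2 b) (hU.integrable_comp_add hP2 a)]

lemma continuous_translationRemainder (hU : IsLC1 U F) (hm : IsP2 m) (x x' : Ed d) {s : ℝ}
    (hs : s ∈ Icc (0 : ℝ) 1) : Continuous (translationRemainder F m x x' s) := by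
  have hP2 := isP2_mixM (isP2_map_add hm x) (isP2_map_add hm x') hs
  exact (((hU.continuous hP2).comp (continuous_add_const x')).sub
    ((hU.continuous hP2).comp (continuous_add_const x))).sub
    (((hU.continuous_fderiv (isP2_map_add hm x)).comp (continuous_const_add x)).clm_apply
      continuous_const)

lemma abs_translationRemainder_le (hU : IsLC1 U F) (hm : IsP2 m) (x x' : Ed d) {s : ℝ}
    (hs : s ∈ Icc (0 : ℝ) 1) (y : Ed d) {C : ℝ}
    (hC : ∀ w ∈ Metric.closedBall (y + x) ‖x' - x‖, ‖fderiv ℝ (F (mixM s (m.map (· + x))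
      (m.map (· + x')))) w - fderiv ℝ (F (m.map (· + x))) (x + y)‖ ≤ C) :
    |translationRemainder F m x x' s y| ≤ C * ‖x' - x‖ := by
  have hP2 := isP2_mixM (isP2_map_add hm x) (isP2_map_add hm x') hs
  have h := (convex_closedBall (y + x) ‖x' - x‖).norm_image_sub_le_of_norm_fderiv_le'
    (x := y + x) (y := y + x') (fun _ _ => (hU.differentiable hP2).differentiableAt) hC
    (Metric.mem_closedBall_self (norm_nonneg _))
    (by rw [Metric.mem_closedBall, dist_eq_norm, add_sub_add_left_eq_sub])
  rwa [add_sub_add_left_eq_sub] at h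

lemma exists_abs_translationRemainder_le (hU : IsLC1 U F) (hm : IsP2 m) :
    ∃ C, 0 ≤ C ∧ ∀ x x' : Ed d, ∀ s ∈ Icc (0 : ℝ) 1, ∀ y,
      |translationRemainder F m x x' s y| ≤ C * ‖x' - x‖ := by
  obtain ⟨B, hB⟩ := hU.exists_norm_fderiv_le
  have hB₀ : 0 ≤ B := (norm_nonneg _).trans (hB m 0 hm)
  refine ⟨2 * B, by positivity, fun x x' s hs y =>
    hU.abs_translationRemainder_le hm x x' hs y fun w _ => ?_⟩
  have hP2 := isP2_mixM (isP2_map_add hm x) (isP2_map_add hm x') hs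
  exact (norm_sub_le _ _).trans (by linarith [hB _ w hP2, hB _ (x + y) (isP2_map_add hm x)])

lemma tendsto_translationRemainder_div (hU : IsLC1 U F) (hm : IsP2 m) (x : Ed d) {s : ℝ}
    (hs : s ∈ Icc (0 : ℝ) 1) (y : Ed d) :
    Tendsto (fun x' => ‖x' - x‖⁻¹ * translationRemainder F m x x' s y) (𝓝 x) (𝓝 0) := by
  have := hm.1
  refine Metric.tendsto_nhds.2 fun ε hε => ?_
  obtain ⟨δ, hδ, hδ'⟩ :=
    hU.w2ContinuousAt_fderiv (isP2_map_add hm x) (x + y) (ε / 2) (by positivity)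
  filter_upwards [Metric.ball_mem_nhds x hδ] with x' hx'
  rw [Metric.mem_ball, dist_eq_norm] at hx'
  rw [dist_zero_right]
  refine (inv_norm_mul_le_of_abs_le (by positivity)
    (hU.abs_translationRemainder_le hm x x' hs y fun w hw => (hδ' _ _ ?_ ?_ ?_).le)).trans_lt
    (by linarith)
  · exact isP2_mixM (isP2_map_add hm x) (isP2_map_add hm x') hs
  · exact (W2_map_add_mixM_le m x x' hs).trans_lt (by rwa [norm_sub_rev])
  · rw [Metric.mem_closedBall, dist_eq_norm, add_comm] at hw
    exact hw.trans_lt hx'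

lemma continuousOn_integral_translationRemainder (hU : IsLC1 U F) (hm : IsP2 m) (x x' : Ed d) :
    ContinuousOn (fun s => ∫ y, translationRemainder F m x x' s y ∂m) (Icc 0 1) := by
  have := hm.1
  obtain ⟨C, -, hC⟩ := hU.exists_abs_translationRemainder_le hm
  refine continuousOn_of_dominated (bound := fun _ => C * ‖x' - x‖)
    (fun s hs => (hU.continuous_translationRemainder hm x x' hs).aestronglyMeasurable)
    (fun s hs => ae_of_all _ (hC x x' s hs)) (integrable_const _) (ae_of_all _ fun y => ?_)
  exact ((hU.continuousOn_mixM_map_add hm x x' (y + x')).sub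
      (hU.continuousOn_mixM_map_add hm x x' (y + x))).sub continuousOn_const

lemma sub_sub_eq_integral_translationRemainder (hU : IsLC1 U F) (hm : IsP2 m) (x x' : Ed d) :
    U (m.map (· + x')) - U (m.map (· + x))
      - (∫ y, fderiv ℝ (F (m.map (· + x))) (x + y) ∂m) (x' - x)
      = ∫ s in (0 : ℝ)..1, ∫ y, translationRemainder F m x x' s y ∂m := by
  have := hm.1
  have hν := isP2_map_add hm x
  rw [ContinuousLinearMap.integral_apply (hU.integrable_fderiv_const_add hν x),
    hU.sub_eq_integral_map_add hm x x']
  have hA : EqOn (fun s => ∫ y, (F (mixM s (m.map (· + x)) (m.map (· + x'))) (y + x')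
        - F (mixM s (m.map (· + x)) (m.map (· + x'))) (y + x)) ∂m)
      (fun s => ∫ y, translationRemainder F m x x' s y ∂m
        + ∫ y, fderiv ℝ (F (m.map (· + x))) (x + y) (x' - x) ∂m) (uIcc 0 1) := by
    intro s hs
    rw [uIcc_of_le zero_le_one] at hs
    have hP2 := isP2_mixM hν (isP2_map_add hm x') hs
    have hlin : Integrable (fun y => fderiv ℝ (F (m.map (· + x))) (x + y) (x' - x)) m :=
      (hU.integrable_fderiv_const_add hν x).apply_continuousLinearMap (x' - x)
    have hdiff : Integrable (fun y => F (mixM s (m.map (· + x)) (m.map (· + x'))) (y + x')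
        - F (mixM s (m.map (· + x)) (m.map (· + x'))) (y + x)) m :=
      (hU.integrable_comp_add hP2 x').sub (hU.integrable_comp_add hP2 x)
    simp only [translationRemainder]
    rw [integral_sub hdiff hlin, sub_add_cancel]
  rw [intervalIntegral.integral_congr hA, intervalIntegral.integral_add
    ((hU.continuousOn_integral_translationRemainder hm x x').intervalIntegrable_of_Icc
      zero_le_one) intervalIntegrable_const]
  simp

theorem hasFDerivAt_map_add (hU : IsLC1 U F) (hm : IsP2 m) (x : Ed d) :
    HasFDerivAt (fun x' => U (m.map (· + x')))
      (∫ y, fderiv ℝ (F (m.map (· + x))) (x + y) ∂m) x := by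
  have := hm.1
  obtain ⟨C, hC₀, hC⟩ := hU.exists_abs_translationRemainder_le hm
  rw [hasFDerivAt_iff_tendsto]
  have h := tendsto_intervalIntegral_integral_of_dominated zero_le_one (μ := m) (l := 𝓝 x)
    (G := fun x' s y => ‖x' - x‖⁻¹ * translationRemainder F m x x' s y) (g := fun _ _ => 0)
    (fun x' s hs =>
      ((hU.continuous_translationRemainder hm x x' hs).const_mul _).aestronglyMeasurable)
    (fun x' => ((hU.continuousOn_integral_translationRemainder hm x x').const_smul
      ‖x' - x‖⁻¹).congr fun _ _ => integral_const_mul _ _)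
    (fun x' s hs y => inv_norm_mul_le_of_abs_le hC₀ (hC x x' s hs y))
    (fun s hs => hU.tendsto_translationRemainder_div hm x hs)
  simp only [integral_zero, intervalIntegral.integral_zero] at h
  refine (tendsto_zero_iff_norm_tendsto_zero.1 h).congr fun x' => ?_
  simp only [integral_const_mul, intervalIntegral.integral_const_mul, norm_mul, norm_inv,
    norm_norm, hU.sub_sub_eq_integral_translationRemainder hm x x']

theorem continuous_integral_fderiv_map_add (hU : IsLC1 U F) (hm : IsP2 m) :
    Continuous fun x => ∫ y, fderiv ℝ (F (m.map (· + x))) (x + y) ∂m := by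
  have := hm.1
  obtain ⟨B, hB⟩ := hU.exists_norm_fderiv_le
  refine continuous_iff_continuousAt.2 fun x => continuousAt_of_dominated (bound := fun _ => B)
    (Eventually.of_forall fun x' => ((hU.continuous_fderiv (isP2_map_add hm x')).comp
      (continuous_const_add x')).aestronglyMeasurable)
    (Eventually.of_forall fun x' => ae_of_all _ fun y => hB _ _ (isP2_map_add hm x'))
    (integrable_const B) (ae_of_all _ fun y => ?_)
  refine (hU.w2ContinuousAt_fderiv (isP2_map_add hm x) (x + y)).tendsto
    (Eventually.of_forall fun x' => isP2_map_add hm x') ?_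
    ((continuous_add_const y).tendsto x)
  have hlim : Tendsto (fun x' => ‖x - x'‖) (𝓝 x) (𝓝 0) := by
    simpa using ((continuous_const.sub continuous_id).norm.tendsto x :
      Tendsto (fun x' : Ed d => ‖x - x'‖) _ _)
  exact squeeze_zero (fun _ => W2_nonneg _ _) (fun x' => W2_map_add_le m x x') hlim

end IsLC1

theorem stmt_14_general (d : ℕ)
    (U : Measure (Ed d) → ℝ) (F : Measure (Ed d) → Ed d → ℝ)
    (hU : IsLC1 U F) (m : Measure (Ed d)) (hm : IsP2 m) :
    (∀ x : Ed d,
      HasGradientAt (fun x' : Ed d => U (Measure.map (fun z => z + x') m))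
        (∫ y, gradient (F (Measure.map (fun z => z + x) m)) (x + y) ∂m) x) ∧
    Continuous
      (fun x : Ed d => ∫ y, gradient (F (Measure.map (fun z => z + x) m)) (x + y) ∂m) := by
  have hgrad (x : Ed d) : ∫ y, gradient (F (m.map (· + x))) (x + y) ∂m
      = (toDual ℝ (Ed d)).symm (∫ y, fderiv ℝ (F (m.map (· + x))) (x + y) ∂m) :=
    (toDual ℝ (Ed d)).symm.toLinearIsometry.integral_comp_comm _
  simp only [hgrad]
  refine ⟨fun x => ?_,
    (toDual ℝ (Ed d)).symm.continuous.comp (hU.continuous_integral_fderiv_map_add hm)⟩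
  rw [hasGradientAt_iff_hasFDerivAt, LinearIsometryEquiv.apply_symm_apply]
  exact hU.hasFDerivAt_map_add hm x

/-- if `U` is `L-C¹` and `V(x,m) := U((id+x)♯m)`, then for each `m ∈ 𝒫₂`
the map `x ↦ V(x,m)` is `C¹` with
`D_x V(x,m) = ∫ D_m U((id+x)♯m, x+y) m(dy)`. -/
theorem stmt_14 (d : ℕ) (hd : 1 ≤ d)
    (U : Measure (Ed d) → ℝ) (F : Measure (Ed d) → Ed d → ℝ)
    (hU : IsLC1 U F) (m : Measure (Ed d)) (hm : IsP2 m) :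
    (∀ x : Ed d,
      HasGradientAt (fun x' : Ed d => U (Measure.map (fun z => z + x') m))
        (∫ y, gradient (F (Measure.map (fun z => z + x) m)) (x + y) ∂m) x) ∧
    Continuous
      (fun x : Ed d => ∫ y, gradient (F (Measure.map (fun z => z + x) m)) (x + y) ∂m) :=
  stmt_14_general d U F hU m hm

end
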